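/- Let L ≥ 2 be an integer and μ_1, …, μ_L, μ_min real numbers with μ_t ≥ μ_min > 0 for all t. Define J(p) = Σ_{t=1}^{L} μ_t (1-p)^{t-1} and F(θ) = J(σ(θ)), and let θ : ℝ → ℝ be differentiable with θ'(s) = F'(θ(s)) for all s ≥ 0. Then the stopping probability p(s) = σ(θ(s)) converges to 0 as s → ∞. -/

import Mathlib

open Filter Finset

/-- The sigmoid function `σ(θ) = 1 / (1 + exp (-θ))`. -/
noncomputable def sigmoid (x : ℝ) : ℝ := 1 / (1 + Real.exp (-x))

lemma one_add_exp_pos (x : ℝ) : 0 < 1 + Real.exp (-x) := by positivity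

lemma sigmoid_pos (x : ℝ) : 0 < sigmoid x := by
  unfold sigmoid; positivity

lemma sigmoid_lt_one (x : ℝ) : sigmoid x < 1 := by
  unfold sigmoid
  rw [div_lt_one (one_add_exp_pos x)]
  linarith [Real.exp_pos (-x)]

lemma hasDerivAt_sigmoid (x : ℝ) :
    HasDerivAt sigmoid (sigmoid x * (1 - sigmoid x)) x := by
  have h1 : HasDerivAt (fun y : ℝ => 1 + Real.exp (-y)) (-Real.exp (-x)) x := by
    have := ((Real.hasDerivAt_exp (-x)).comp x (hasDerivAt_neg x)).const_add 1
    simpa using this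
  have h2 := h1.inv (ne_of_gt (one_add_exp_pos x))
  have heq : sigmoid = fun y : ℝ => (1 + Real.exp (-y))⁻¹ := by
    funext y; simp [sigmoid, one_div]
  rw [heq]
  refine h2.congr_deriv ?_
  have hpos := one_add_exp_pos x
  field_simp
  ring

lemma sigmoid_tendsto_atBot : Tendsto sigmoid atBot (nhds 0) := by
  have h1 : Tendsto (fun x : ℝ => 1 + Real.exp (-x)) atBot atTop := by
    apply tendsto_atTop_add_const_left
    exact Real.tendsto_exp_atTop.comp tendsto_neg_atBot_atTop
  have h2 := tendsto_inv_atTop_zero.comp h1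
  have heq : sigmoid = (fun r : ℝ => r⁻¹) ∘ fun x : ℝ => 1 + Real.exp (-x) := by
    funext x; simp [sigmoid, one_div, Function.comp]
  rw [heq]
  exact h2

/-- Under gradient flow `θ'(s) = F'(θ(s))` with `F(θ) = J(σ(θ))` and
`J(p) = ∑_{t=1}^L μ_t (1-p)^{t-1}`, `μ_t ≥ μ_min > 0`: the stopping probability
`p(s) = σ(θ(s))` converges to `0` as `s → ∞`. -/
theorem stopping_prob_tendsto_zero
    (L : ℕ) (hL : 2 ≤ L) (μ : ℕ → ℝ) (μmin : ℝ)
    (hμmin : 0 < μmin) (hμ : ∀ t ∈ Finset.Icc 1 L, μmin ≤ μ t)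
    (J F : ℝ → ℝ)
    (hJ : ∀ q : ℝ, J q = ∑ t ∈ Finset.Icc 1 L, μ t * (1 - q) ^ (t - 1))
    (hF : ∀ x : ℝ, F x = J (sigmoid x))
    (θ : ℝ → ℝ) (hθ : Differentiable ℝ θ)
    (hflow : ∀ s : ℝ, 0 ≤ s → deriv θ s = deriv F (θ s))
    (p : ℝ → ℝ) (hp : ∀ s, p s = sigmoid (θ s)) :
    Tendsto p atTop (nhds 0) := by
  -- the derivative of F
  set D : ℝ → ℝ := fun x => ∑ t ∈ Finset.Icc 1 L,
      μ t * (((t - 1 : ℕ) : ℝ) * (1 - sigmoid x) ^ (t - 1 - 1) *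
        (-(sigmoid x * (1 - sigmoid x)))) with hD
  have hFfun : F = fun x => ∑ t ∈ Finset.Icc 1 L, μ t * (1 - sigmoid x) ^ (t - 1) := by
    funext x; rw [hF, hJ]
  have hFderiv : ∀ x, HasDerivAt F (D x) x := by
    intro x
    rw [hFfun]
    apply HasDerivAt.fun_sum
    intro t _
    exact (((hasDerivAt_sigmoid x).const_sub 1).pow (t - 1)).const_mul (μ t)
  -- bound: D x ≤ -(μmin * (sigmoid x * (1 - sigmoid x)))
  have hDle : ∀ x, D x ≤ -(μmin * (sigmoid x * (1 - sigmoid x))) := by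
    intro x
    have hsp : 0 < sigmoid x * (1 - sigmoid x) :=
      mul_pos (sigmoid_pos x) (by linarith [sigmoid_lt_one x])
    have h2mem : (2 : ℕ) ∈ Finset.Icc 1 L := by
      simp [Finset.mem_Icc]; exact hL
    have hterm : ∀ t ∈ Finset.Icc 1 L,
        μ t * (((t - 1 : ℕ) : ℝ) * (1 - sigmoid x) ^ (t - 1 - 1) *
          (-(sigmoid x * (1 - sigmoid x)))) ≤ 0 := by
      intro t ht
      have hμt : 0 ≤ μ t := le_trans hμmin.le (hμ t ht)
      have h1 : 0 ≤ ((t - 1 : ℕ) : ℝ) * (1 - sigmoid x) ^ (t - 1 - 1) := by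
        apply mul_nonneg (Nat.cast_nonneg _)
        exact pow_nonneg (by linarith [sigmoid_lt_one x]) _
      calc μ t * (((t - 1 : ℕ) : ℝ) * (1 - sigmoid x) ^ (t - 1 - 1) *
          (-(sigmoid x * (1 - sigmoid x))))
          = -(μ t * (((t - 1 : ℕ) : ℝ) * (1 - sigmoid x) ^ (t - 1 - 1)) *
            (sigmoid x * (1 - sigmoid x))) := by ring
        _ ≤ 0 := neg_nonpos.mpr (mul_nonneg (mul_nonneg hμt h1) hsp.le)
    have hsum : D x = (∑ t ∈ (Finset.Icc 1 L).erase 2,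
        μ t * (((t - 1 : ℕ) : ℝ) * (1 - sigmoid x) ^ (t - 1 - 1) *
          (-(sigmoid x * (1 - sigmoid x))))) +
        μ 2 * (((2 - 1 : ℕ) : ℝ) * (1 - sigmoid x) ^ (2 - 1 - 1) *
          (-(sigmoid x * (1 - sigmoid x)))) := by
      rw [hD]
      exact (Finset.sum_erase_add _ _ h2mem).symm
    have herase : (∑ t ∈ (Finset.Icc 1 L).erase 2,
        μ t * (((t - 1 : ℕ) : ℝ) * (1 - sigmoid x) ^ (t - 1 - 1) *
          (-(sigmoid x * (1 - sigmoid x))))) ≤ 0 :=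
      Finset.sum_nonpos fun t ht => hterm t (Finset.mem_of_mem_erase ht)
    have h2val : μ 2 * (((2 - 1 : ℕ) : ℝ) * (1 - sigmoid x) ^ (2 - 1 - 1) *
        (-(sigmoid x * (1 - sigmoid x)))) = -(μ 2 * (sigmoid x * (1 - sigmoid x))) := by
      norm_num
    have hμ2 : μmin ≤ μ 2 := hμ 2 h2mem
    rw [hsum, h2val]
    nlinarith
  -- deriv θ s = D (θ s) for s ≥ 0
  have hderivθ : ∀ s : ℝ, 0 ≤ s → deriv θ s = D (θ s) := by
    intro s hs
    rw [hflow s hs, (hFderiv (θ s)).deriv]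
  -- θ is antitone on Ici 0
  have hanti : AntitoneOn θ (Set.Ici (0 : ℝ)) := by
    apply antitoneOn_of_deriv_nonpos (convex_Ici 0) hθ.continuous.continuousOn
      (hθ.differentiableOn)
    intro s hs
    rw [interior_Ici] at hs
    rw [hderivθ s (le_of_lt hs)]
    have hsp : 0 < sigmoid (θ s) * (1 - sigmoid (θ s)) :=
      mul_pos (sigmoid_pos _) (by linarith [sigmoid_lt_one (θ s)])
    have := hDle (θ s)
    nlinarith
  -- θ tends to -∞
  have hθbot : Tendsto θ atTop atBot := by
    rw [tendsto_atBot]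
    intro B
    have hex : ∃ s₀ : ℝ, 0 ≤ s₀ ∧ θ s₀ ≤ B := by
      by_contra hcon
      push_neg at hcon
      have hB0 : B < θ 0 := hcon 0 le_rfl
      -- min of the continuous positive function on [B, θ 0]
      have hKne : (Set.Icc B (θ 0)).Nonempty := ⟨B, le_refl B, hB0.le⟩
      have hcont : ContinuousOn (fun x => μmin * (sigmoid x * (1 - sigmoid x)))
          (Set.Icc B (θ 0)) := by
        apply Continuous.continuousOn
        have : Continuous sigmoid := by
          apply Continuous.div continuous_const
          · exact continuous_const.add (Real.continuous_exp.comp continuous_neg)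
          · intro x; exact ne_of_gt (one_add_exp_pos x)
        exact continuous_const.mul (this.mul (continuous_const.sub this))
      obtain ⟨c, hcK, hc⟩ := isCompact_Icc.exists_isMinOn hKne hcont
      set δ : ℝ := μmin * (sigmoid c * (1 - sigmoid c)) with hδ
      have hδpos : 0 < δ := by
        apply mul_pos hμmin
        exact mul_pos (sigmoid_pos c) (by linarith [sigmoid_lt_one c])
      have hmem : ∀ s : ℝ, 0 ≤ s → θ s ∈ Set.Icc B (θ 0) := by
        intro s hs
        exact ⟨(hcon s hs).le, hanti (Set.mem_Ici.mpr le_rfl) (Set.mem_Ici.mpr hs) hs⟩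
      have hdle : ∀ s : ℝ, 0 ≤ s → deriv θ s ≤ -δ := by
        intro s hs
        rw [hderivθ s hs]
        have h1 := hDle (θ s)
        have h2 : δ ≤ μmin * (sigmoid (θ s) * (1 - sigmoid (θ s))) :=
          hc (hmem s hs)
        linarith
      -- u s = θ s + δ s is antitone on Ici 0
      have hu : AntitoneOn (fun s => θ s + δ * s) (Set.Ici (0 : ℝ)) := by
        apply antitoneOn_of_deriv_nonpos (convex_Ici 0)
        · exact (hθ.continuous.add (continuous_const.mul continuous_id)).continuousOn
        · exact (hθ.add ((differentiable_id.const_mul δ))).differentiableOn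
        · intro s hs
          rw [interior_Ici] at hs
          have hd : HasDerivAt (fun s => θ s + δ * s) (deriv θ s + δ) s := by
            have := ((hθ s).hasDerivAt).add ((hasDerivAt_id s).const_mul δ)
            exact this.congr_deriv (by ring)
          rw [hd.deriv]
          linarith [hdle s hs.le]
      set s₁ : ℝ := (θ 0 - B) / δ + 1 with hs₁
      have hs₁pos : 0 < s₁ := by
        have h0 : 0 ≤ (θ 0 - B) / δ := div_nonneg (by linarith) hδpos.le
        rw [hs₁]; linarith
      have := hu (Set.mem_Ici.mpr le_rfl) (Set.mem_Ici.mpr hs₁pos.le) hs₁pos.le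
      simp only at this
      -- θ s₁ + δ s₁ ≤ θ 0
      have hθs₁ : θ s₁ ≤ θ 0 - δ * s₁ := by linarith
      have hδs₁ : δ * s₁ = (θ 0 - B) + δ := by
        rw [hs₁]; field_simp
      have : θ s₁ ≤ B - δ := by rw [hδs₁] at hθs₁; linarith
      have := hcon s₁ hs₁pos.le
      linarith
    obtain ⟨s₀, hs₀, hθs₀⟩ := hex
    filter_upwards [eventually_ge_atTop s₀] with s hs
    calc θ s ≤ θ s₀ := hanti (Set.mem_Ici.mpr hs₀) (Set.mem_Ici.mpr (le_trans hs₀ hs)) hs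
    _ ≤ B := hθs₀
  have : Tendsto (fun s => sigmoid (θ s)) atTop (nhds 0) :=
    sigmoid_tendsto_atBot.comp hθbot
  have hpfun : p = fun s => sigmoid (θ s) := funext hp
  rw [hpfun]
  exact this
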